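/- If every node has exactly one in-neighbor except at most one node with two in-neighbors, the graph is strongly connected, and the intervals are pairwise disjoint, then every trajectory of the interval consensus dynamics converges to a limit point d* ∈ ℝ^n (each coordinate has a finite limit). -/

import Mathlib

/-!
Order the pairwise disjoint intervals on the line. If every in-neighbour `j ≠ v` of a node `v`
carries an interval above `[p_v, q_v]`, then as long as `x_v ≤ q_v` the state `x_v` is pushed
upwards at a rate at least `a_{vu} (p_u - q_v) > 0` for any such in-neighbour `u`, so `x_v`
eventually exceeds `q_v` for good and the saturated output of `v` is pinned at `q_v`;
symmetrically for in-neighbours below. A node with in-neighbours on both sides has two distinct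
in-neighbours, hence under the degree bound it has no self-loop and is the unique node with two
in-neighbours; its in-neighbours are therefore pinned. So every saturated output converges, and
then every state, which solves `ẋ = u(t) - A x` with `A > 0` and convergent input `u`, converges.
Strong connectivity gives each node an in-neighbour other than itself as soon as there are two
nodes; a single node is eventually monotone, since it stays in `(-∞, q]` once it enters it.
-/

open Finset Filter

/-- Saturation of `z` onto the interval `[p, q]`. -/
noncomputable def sat (p q z : ℝ) : ℝ := max p (min z q)

open Topology

theorem lt_or_lt_of_disjoint_Icc {α : Type*} [LinearOrder α] {p₁ q₁ p₂ q₂ : α}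
    (h₁ : p₁ ≤ q₁) (h₂ : p₂ ≤ q₂) (h : Disjoint (Set.Icc p₁ q₁) (Set.Icc p₂ q₂)) :
    q₁ < p₂ ∨ q₂ < p₁ := by
  by_contra! h'
  exact Set.disjoint_left.1 h ⟨le_max_left p₁ p₂, max_le h₁ h'.1⟩
    ⟨le_max_right p₁ p₂, max_le h'.2 h₂⟩

theorem Relation.ReflTransGen.exists_ne_rel_of_ne {α : Type*} {r : α → α → Prop} {a b : α}
    (h : ReflTransGen r a b) (hab : a ≠ b) : ∃ c ≠ b, r c b := by
  induction h using Relation.ReflTransGen.head_induction_on with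
  | refl => exact absurd rfl hab
  | @head a c hac _ ih =>
    by_cases hcb : c = b
    · exact ⟨a, hab, hcb ▸ hac⟩
    · exact ih hcb

section Sat

theorem le_sat (p q z : ℝ) : p ≤ sat p q z := le_max_left _ _

theorem sat_le {p q : ℝ} (hpq : p ≤ q) (z : ℝ) : sat p q z ≤ q := max_le hpq (min_le_right _ _)

theorem self_le_sat (p : ℝ) {q z : ℝ} (h : z ≤ q) : z ≤ sat p q z := by
  rw [sat, min_eq_left h]
  exact le_max_right _ _

theorem sat_eq_right {p q z : ℝ} (hpq : p ≤ q) (h : q ≤ z) : sat p q z = q := by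
  rw [sat, min_eq_right h, max_eq_right hpq]

theorem sat_neg {p q : ℝ} (hpq : p ≤ q) (z : ℝ) : sat (-q) (-p) (-z) = -sat p q z := by
  simp only [sat, max_def, min_def]
  split_ifs <;> linarith

theorem continuous_sat (p q : ℝ) : Continuous (sat p q) :=
  continuous_const.max (continuous_id.min continuous_const)

end Sat

section ScalarODE

variable {x x' : ℝ → ℝ}

theorem eventually_ge_of_hasDerivAt {c δ : ℝ} (hx : ∀ t, HasDerivAt x (x' t) t) (hδ : 0 < δ)
    (h : ∀ᶠ t in atTop, x t ≤ c → δ ≤ x' t) : ∀ᶠ t in atTop, c ≤ x t := by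
  obtain ⟨T, hT⟩ := eventually_atTop.1 h
  have hcont : Continuous x := continuous_iff_continuousAt.2 fun t => (hx t).continuousAt
  obtain ⟨t₀, hTt₀, hct₀⟩ : ∃ t₀ ≥ T, c ≤ x t₀ := by
    by_contra! hlt
    have hrise := (convex_Ici T).mul_sub_le_image_sub_of_le_deriv hcont.continuousOn
      (fun t _ => (hx t).differentiableAt.differentiableWithinAt) fun t ht => by
        rw [(hx t).deriv]
        exact hT t (interior_subset ht) (hlt t (interior_subset ht)).le
    have hgap : 0 ≤ (c - x T) / δ := div_nonneg (sub_nonneg.2 (hlt T le_rfl).le) hδ.le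
    have := hrise T Set.self_mem_Ici (T + (c - x T) / δ) (by simpa using hgap) (by linarith)
    rw [add_sub_cancel_left, mul_div_cancel₀ _ hδ.ne'] at this
    linarith [hlt (T + (c - x T) / δ) (by linarith)]
  filter_upwards [eventually_ge_atTop t₀] with t ht
  exact image_le_of_deriv_right_lt_deriv_boundary continuousOn_const
    (fun s _ => hasDerivWithinAt_const s _ c) hct₀ hx
    (fun s hs hcs => hδ.trans_le (hT s (hTt₀.trans hs.1) hcs.ge)) (Set.right_mem_Icc.2 ht)

theorem eventually_lt_of_hasDerivAt_sub_mul {u : ℝ → ℝ} {A L c : ℝ} (hA : 0 < A)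
    (hx : ∀ t, HasDerivAt x (u t - A * x t) t) (hu : Tendsto u atTop (𝓝 L)) (hc : c < L / A) :
    ∀ᶠ t in atTop, c < x t := by
  obtain ⟨c', hcc', hc'⟩ := exists_between hc
  rw [lt_div_iff₀ hA] at hc'
  have hδ : 0 < (L - c' * A) / 2 := by linarith
  refine (eventually_ge_of_hasDerivAt hx hδ ?_).mono fun t ht => hcc'.trans_le ht
  filter_upwards [hu.eventually (eventually_ge_nhds (by linarith : L - (L - c' * A) / 2 < L))]
    with t hut hxt
  nlinarith [mul_le_mul_of_nonneg_left hxt hA.le]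

theorem tendsto_div_of_hasDerivAt_sub_mul {u : ℝ → ℝ} {A L : ℝ} (hA : 0 < A)
    (hx : ∀ t, HasDerivAt x (u t - A * x t) t) (hu : Tendsto u atTop (𝓝 L)) :
    Tendsto x atTop (𝓝 (L / A)) := by
  refine tendsto_order.2 ⟨fun c hc => eventually_lt_of_hasDerivAt_sub_mul hA hx hu hc,
    fun c hc => ?_⟩
  have hneg : ∀ t, HasDerivAt (fun s => -x s) (-u t - A * -x t) t := fun t =>
    (hx t).neg.congr_deriv (by ring)
  refine (eventually_lt_of_hasDerivAt_sub_mul hA hneg hu.neg (c := -c) ?_).mono fun t ht => ?_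
  · rw [neg_div]
    exact neg_lt_neg hc
  · exact neg_lt_neg_iff.1 ht

theorem le_of_hasDerivAt_nonpos_of_gt {c t₀ : ℝ} (hx : ∀ t, HasDerivAt x (x' t) t)
    (hx' : ∀ t, c < x t → x' t ≤ 0) (h₀ : x t₀ ≤ c) {t : ℝ} (ht : t₀ ≤ t) : x t ≤ c := by
  have hK : 0 < 1 + t - t₀ := by linarith
  refine le_of_forall_pos_le_add fun ε hε => ?_
  -- the sign condition is not strict at `c`, so fence `x` by a line of positive slope above `c`
  have hB : ∀ s, HasDerivAt (fun s => c + ε * ((1 + s - t₀) / (1 + t - t₀)))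
      (ε * (1 / (1 + t - t₀))) s := fun s =>
    (((hasDerivAt_id s).const_add 1 |>.sub_const t₀).div_const _ |>.const_mul ε).const_add c
  have hfence := image_le_of_deriv_right_lt_deriv_boundary
    (continuous_iff_continuousAt.2 fun s => (hx s).continuousAt).continuousOn
    (fun s _ => (hx s).hasDerivWithinAt) ?_ hB ?_ (Set.right_mem_Icc.2 ht)
  · rwa [div_self hK.ne', mul_one] at hfence
  · have : 0 < ε * ((1 + t₀ - t₀) / (1 + t - t₀)) := mul_pos hε (div_pos (by linarith) hK)
    linarith
  · intro s hs hxs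
    refine (hx' s ?_).trans_lt (mul_pos hε (one_div_pos.2 hK))
    have : 0 < ε * ((1 + s - t₀) / (1 + t - t₀)) := mul_pos hε (div_pos (by linarith [hs.1]) hK)
    linarith

theorem exists_tendsto_of_monotoneOn_Ici {f : ℝ → ℝ} {t₀ M : ℝ} (hf : MonotoneOn f (Set.Ici t₀))
    (hM : ∀ t ≥ t₀, f t ≤ M) : ∃ ℓ, Tendsto f atTop (𝓝 ℓ) := by
  have hmono : Monotone fun t => f (max t t₀) := fun s t hst =>
    hf (le_max_right s t₀) (le_max_right t t₀) (max_le_max_right t₀ hst)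
  refine ⟨_, (tendsto_atTop_ciSup hmono ⟨M, ?_⟩).congr' ?_⟩
  · rintro _ ⟨t, rfl⟩
    exact hM _ (le_max_right t t₀)
  · filter_upwards [eventually_ge_atTop t₀] with t ht
    rw [max_eq_left ht]

theorem exists_tendsto_of_hasDerivAt_mul_sat_sub {a p q : ℝ} (ha : 0 ≤ a) (hpq : p ≤ q)
    (hx : ∀ t, HasDerivAt x (a * (sat p q (x t) - x t)) t) : ∃ ℓ, Tendsto x atTop (𝓝 ℓ) := by
  have hdecr : ∀ t, q < x t → a * (sat p q (x t) - x t) ≤ 0 := fun t ht =>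
    mul_nonpos_of_nonneg_of_nonpos ha (by linarith [sat_le hpq (x t)])
  by_cases hq : ∃ t₀, x t₀ ≤ q
  · obtain ⟨t₀, h₀⟩ := hq
    have hle : ∀ t ≥ t₀, x t ≤ q := fun t ht => le_of_hasDerivAt_nonpos_of_gt hx hdecr h₀ ht
    refine exists_tendsto_of_monotoneOn_Ici ?_ hle
    refine monotoneOn_of_hasDerivWithinAt_nonneg (convex_Ici t₀)
      (continuous_iff_continuousAt.2 fun t => (hx t).continuousAt).continuousOn
      (fun t _ => (hx t).hasDerivWithinAt) fun t ht => ?_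
    exact mul_nonneg ha (sub_nonneg.2 (self_le_sat p (hle t (interior_subset ht))))
  · push Not at hq
    exact ⟨_, tendsto_atTop_ciInf (antitone_of_hasDerivAt_nonpos hx fun t => hdecr t (hq t))
      ⟨q, by rintro _ ⟨t, rfl⟩; exact (hq t).le⟩⟩

end ScalarODE

section Network

variable {ι : Type*} [Fintype ι]

def IsIntervalConsensusSolution (a : ι → ι → ℝ) (p q : ι → ℝ) (x : ℝ → ι → ℝ) : Prop :=
  ∀ i t, HasDerivAt (fun s => x s i) (∑ j, a i j * (sat (p j) (q j) (x t j) - x t i)) t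

noncomputable def inNeighbors (a : ι → ι → ℝ) (v : ι) : Finset ι := univ.filter fun j => 0 < a v j

def Straddles (a : ι → ι → ℝ) (p q : ι → ℝ) (v : ι) : Prop :=
  ∃ j₁ j₂, 0 < a v j₁ ∧ 0 < a v j₂ ∧ q j₁ < p v ∧ q v < p j₂

variable {a : ι → ι → ℝ} {p q : ι → ℝ}

theorem Straddles.one_lt_card {v : ι} (hpq : ∀ m, p m ≤ q m) (h : Straddles a p q v) :
    1 < (inNeighbors a v).card := by
  obtain ⟨j₁, j₂, h₁, h₂, hj₁, hj₂⟩ := h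
  refine one_lt_card_iff.2 ⟨j₁, j₂, by simpa [inNeighbors], by simpa [inNeighbors], ?_⟩
  rintro rfl
  linarith [hpq v, hpq j₁]

theorem Straddles.not_pos_self {v : ι} (hpq : ∀ m, p m ≤ q m)
    (hdeg : (inNeighbors a v).card ≤ 2) (h : Straddles a p q v) : ¬0 < a v v := by
  intro hv
  obtain ⟨j₁, j₂, h₁, h₂, hj₁, hj₂⟩ := h
  refine hdeg.not_gt (two_lt_card_iff.2 ⟨j₁, v, j₂, by simpa [inNeighbors], by simpa [inNeighbors],
    by simpa [inNeighbors], fun h => ?_, fun h => ?_, fun h => ?_⟩)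
  · rw [h] at hj₁
    linarith [hpq v]
  · rw [h] at hj₁
    linarith [hpq v, hpq j₂]
  · rw [← h] at hj₂
    linarith [hpq v]

namespace IsIntervalConsensusSolution

variable {x : ℝ → ι → ℝ} (hx : IsIntervalConsensusSolution a p q x)
include hx

theorem neg (hpq : ∀ m, p m ≤ q m) : IsIntervalConsensusSolution a (-q) (-p) (-x) := by
  intro i t
  refine (hx i t).neg.congr_deriv ?_
  simp only [Pi.neg_apply, sat_neg (hpq _), ← sum_neg_distrib]
  exact sum_congr rfl fun j _ => by ring

theorem eventually_sat_eq_right (ha : ∀ i j, 0 ≤ a i j) (hpq : ∀ m, p m ≤ q m) {u v : ι}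
    (hu : u ≠ v) (hau : 0 < a v u) (habove : ∀ j ≠ v, 0 < a v j → q v < p j) :
    ∀ᶠ t in atTop, sat (p v) (q v) (x t v) = q v := by
  have hδ : 0 < a v u * (p u - q v) := mul_pos hau (sub_pos.2 (habove u hu hau))
  refine (eventually_ge_of_hasDerivAt (hx v) hδ (.of_forall fun t hle => ?_)).mono
    fun t ht => sat_eq_right (hpq v) ht
  have hterm : ∀ j, 0 ≤ a v j * (sat (p j) (q j) (x t j) - x t v) := by
    intro j
    rcases (ha v j).eq_or_lt with h0 | hpos
    · simp [← h0]
    refine mul_nonneg hpos.le (sub_nonneg.2 ?_)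
    rcases eq_or_ne j v with rfl | hj
    · exact self_le_sat _ hle
    · exact hle.trans ((habove j hj hpos).le.trans (le_sat _ _ _))
  calc a v u * (p u - q v) ≤ a v u * (sat (p u) (q u) (x t u) - x t v) :=
        mul_le_mul_of_nonneg_left (by linarith [le_sat (p u) (q u) (x t u)]) hau.le
    _ ≤ ∑ j, a v j * (sat (p j) (q j) (x t j) - x t v) :=
        single_le_sum (fun j _ => hterm j) (mem_univ u)

theorem eventually_sat_eq_left (ha : ∀ i j, 0 ≤ a i j) (hpq : ∀ m, p m ≤ q m) {u v : ι}
    (hu : u ≠ v) (hau : 0 < a v u) (hbelow : ∀ j ≠ v, 0 < a v j → q j < p v) :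
    ∀ᶠ t in atTop, sat (p v) (q v) (x t v) = p v := by
  refine ((hx.neg hpq).eventually_sat_eq_right ha (fun m => neg_le_neg (hpq m)) hu hau
    fun j hj hpos => neg_lt_neg (hbelow j hj hpos)).mono fun t ht => ?_
  simpa only [Pi.neg_apply, sat_neg (hpq v), neg_inj] using ht

theorem tendsto_sat_or_straddles (ha : ∀ i j, 0 ≤ a i j) (hpq : ∀ m, p m ≤ q m)
    (hord : Pairwise fun i j => q i < p j ∨ q j < p i) {u v : ι} (hu : u ≠ v) (hau : 0 < a v u) :
    (∃ c, Tendsto (fun t => sat (p v) (q v) (x t v)) atTop (𝓝 c)) ∨ Straddles a p q v := by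
  by_cases habove : ∀ j ≠ v, 0 < a v j → q v < p j
  · exact .inl ⟨_, tendsto_nhds_of_eventually_eq (hx.eventually_sat_eq_right ha hpq hu hau habove)⟩
  by_cases hbelow : ∀ j ≠ v, 0 < a v j → q j < p v
  · exact .inl ⟨_, tendsto_nhds_of_eventually_eq (hx.eventually_sat_eq_left ha hpq hu hau hbelow)⟩
  push Not at habove hbelow
  obtain ⟨j₁, hj₁v, h₁, hj₁⟩ := habove
  obtain ⟨j₂, hj₂v, h₂, hj₂⟩ := hbelow
  exact .inr ⟨j₁, j₂, h₁, h₂, (hord hj₁v).resolve_right hj₁.not_gt,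
    (hord hj₂v).resolve_left hj₂.not_gt⟩

theorem exists_tendsto_of_tendsto_sat {v : ι} (hA : 0 < ∑ j, a v j)
    (hsat : ∀ j, a v j ≠ 0 → ∃ c, Tendsto (fun t => sat (p j) (q j) (x t j)) atTop (𝓝 c)) :
    ∃ ℓ, Tendsto (fun t => x t v) atTop (𝓝 ℓ) := by
  have hinput : ∀ j, ∃ c, Tendsto (fun t => a v j * sat (p j) (q j) (x t j)) atTop (𝓝 c) := by
    intro j
    by_cases hj : a v j = 0
    · exact ⟨0, by simp [hj]⟩
    · obtain ⟨c, hc⟩ := hsat j hj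
      exact ⟨_, hc.const_mul _⟩
  choose c hc using hinput
  refine ⟨_, tendsto_div_of_hasDerivAt_sub_mul hA (fun t => (hx v t).congr_deriv ?_)
    (tendsto_finsetSum univ fun j _ => hc j)⟩
  simp only [mul_sub, sum_sub_distrib, sum_mul]

theorem exists_tendsto (ha : ∀ i j, 0 ≤ a i j) (hpq : ∀ m, p m ≤ q m)
    (hord : Pairwise fun i j => q i < p j ∨ q j < p i) (hnbr : ∀ v, ∃ u ≠ v, 0 < a v u)
    (hdeg : ∀ v, (inNeighbors a v).card ≤ 2)
    (hdeg2 : (univ.filter fun v => (inNeighbors a v).card = 2).card ≤ 1) :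
    ∃ d : ι → ℝ, ∀ i, Tendsto (fun t => x t i) atTop (𝓝 (d i)) := by
  have hA : ∀ v, 0 < ∑ j, a v j := fun v =>
    let ⟨u, _, hau⟩ := hnbr v
    sum_pos' (fun j _ => ha v j) ⟨u, mem_univ u, hau⟩
  have hcases : ∀ v, (∃ c, Tendsto (fun t => sat (p v) (q v) (x t v)) atTop (𝓝 c)) ∨
      Straddles a p q v := fun v =>
    let ⟨_, hu, hau⟩ := hnbr v
    hx.tendsto_sat_or_straddles ha hpq hord hu hau
  have hcard : ∀ v, Straddles a p q v → v ∈ univ.filter fun v => (inNeighbors a v).card = 2 :=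
    fun v hv => mem_filter.2 ⟨mem_univ v, (hdeg v).antisymm (hv.one_lt_card hpq)⟩
  have hsat : ∀ v, ∃ c, Tendsto (fun t => sat (p v) (q v) (x t v)) atTop (𝓝 c) := by
    intro v
    refine (hcases v).elim id fun hv => ?_
    -- a straddling node is the only node with two in-neighbours, so its in-neighbours are pinned
    have hin : ∀ j, a v j ≠ 0 → ∃ c, Tendsto (fun t => sat (p j) (q j) (x t j)) atTop (𝓝 c) := by
      refine fun j hj => (hcases j).resolve_right fun hj' => ?_
      have hjv : j ≠ v := by
        rintro rfl
        exact hv.not_pos_self hpq (hdeg j) ((ha j j).lt_of_ne' hj)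
      exact hjv (card_le_one.1 hdeg2 j (hcard j hj') v (hcard v hv))
    obtain ⟨ℓ, hℓ⟩ := hx.exists_tendsto_of_tendsto_sat (hA v) hin
    exact ⟨_, ((continuous_sat _ _).tendsto ℓ).comp hℓ⟩
  choose d hd using fun v => hx.exists_tendsto_of_tendsto_sat (hA v) fun j _ => hsat j
  exact ⟨d, hd⟩

end IsIntervalConsensusSolution

end Network

/-- On a strongly connected digraph where every node has at most two
in-neighbors, with equality for at most one node, and pairwise disjoint
intervals, every trajectory of the interval consensus dynamics converges to a
limit point `d* ∈ ℝ^n`. -/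
theorem sparse_graph_convergence
    (n : ℕ) (a : Fin (n + 1) → Fin (n + 1) → ℝ) (ha : ∀ i j, 0 ≤ a i j)
    (hSC : ∀ i j : Fin (n + 1), Relation.ReflTransGen (fun u v => 0 < a v u) i j)
    (hdeg : ∀ m, (Finset.univ.filter fun j => 0 < a m j).card ≤ 2)
    (hdeg2 : (Finset.univ.filter fun m =>
      (Finset.univ.filter fun j => 0 < a m j).card = 2).card ≤ 1)
    (p q : Fin (n + 1) → ℝ) (hpq : ∀ m, p m ≤ q m)
    (hdisj : ∀ m₁ m₂ : Fin (n + 1), m₁ ≠ m₂ →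
      Disjoint (Set.Icc (p m₁) (q m₁)) (Set.Icc (p m₂) (q m₂)))
    (x : ℝ → Fin (n + 1) → ℝ)
    (hx : ∀ i t, HasDerivAt (fun s => x s i)
      (∑ j, a i j * (sat (p j) (q j) (x t j) - x t i)) t) :
    ∃ d : Fin (n + 1) → ℝ, ∀ i, Tendsto (fun t => x t i) atTop (nhds (d i)) := by
  rcases n.eq_zero_or_pos with rfl | hn
  · obtain ⟨ℓ, hℓ⟩ := exists_tendsto_of_hasDerivAt_mul_sat_sub (ha 0 0) (hpq 0) fun t => by
      simpa using hx 0 t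
    exact ⟨fun _ => ℓ, fun i => Fin.fin_one_eq_zero i ▸ hℓ⟩
  have hnbr : ∀ v : Fin (n + 1), ∃ u ≠ v, 0 < a v u := fun v =>
    let ⟨i, hi⟩ := Fintype.exists_ne_of_one_lt_card (by simpa using hn) v
    (hSC i v).exists_ne_rel_of_ne hi
  exact IsIntervalConsensusSolution.exists_tendsto hx ha hpq
    (fun i j hij => lt_or_lt_of_disjoint_Icc (hpq i) (hpq j) (hdisj i j hij)) hnbr hdeg hdeg2
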